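/- arXiv:1712.08375 — 2 statements merged into one kernel-verified Lean document; each statement's English description precedes it below -/
import Mathlib

section
/- Let f be a transcendental entire function, let α ∈ ℂ, let r > 0, and let T be a connected component of f⁻¹(B(α,r)) such that T is simply connected and the restriction of f is a covering map from T onto B(α,r) \ {α}. Then there exist R > 0 and a connected component V of T ∩ B(0,R) with the following property: whenever γ is a continuum (a nonempty compact connected subset of ℂ) contained in ℂ \ closure(B(0,R)) such that V is contained in a bounded connected component of T \ γ, the connected component of ℂ \ f(γ ∩ T) containing α is contained in B(α,r). -/
open Set Metric Filter Topology OnePoint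

noncomputable section

/-- A transcendental entire function: holomorphic on all of `ℂ` and not a polynomial. -/
def EntireTranscendental (f : ℂ → ℂ) : Prop :=
  Differentiable ℂ f ∧ ¬ ∃ p : Polynomial ℂ, ∀ z, f z = p.eval z

/-- The escaping set `I(f)`. -/
def escapingSet (f : ℂ → ℂ) : Set ℂ :=
  {z | Tendsto (fun n => ‖f^[n] z‖) atTop atTop}

/-- The bounded orbit set `BO(f)`. -/
def boundedOrbitSet (f : ℂ → ℂ) : Set ℂ :=
  {z | ∃ K > 0, ∀ n : ℕ, ‖f^[n] z‖ < K}

/-- The bungee set `BU(f) = ℂ \ (I(f) ∪ BO(f))`. -/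
def bungeeSet (f : ℂ → ℂ) : Set ℂ := (escapingSet f ∪ boundedOrbitSet f)ᶜ

/-- The Fatou set: points where the family of iterates `(fⁿ)ₙ≥₁`, viewed as maps into the
one-point compactification of `ℂ` (with its unique compatible uniform structure, coming
from compactness and Hausdorffness), is equicontinuous. -/
def fatouSet (f : ℂ → ℂ) : Set ℂ :=
  letI : UniformSpace (OnePoint ℂ) := uniformSpaceOfCompactR1
  {z | EquicontinuousAt (fun (n : ℕ) (w : ℂ) => ((f^[n + 1] w : ℂ) : OnePoint ℂ)) z}

/-- The Julia set `J(f) = ℂ \ F(f)`. -/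
def juliaSet (f : ℂ → ℂ) : Set ℂ := (fatouSet f)ᶜ

/-- `U` is a Fatou component of `f`: a connected component of the Fatou set. -/
def IsFatouComponent (f : ℂ → ℂ) (U : Set ℂ) : Prop :=
  ∃ z ∈ fatouSet f, U = connectedComponentIn (fatouSet f) z

/-- `S ∪ {∞}` as a subset of the one-point compactification `ℂ ∪ {∞}`. -/
def withInfty (S : Set ℂ) : Set (OnePoint ℂ) :=
  ((↑) : ℂ → OnePoint ℂ) '' S ∪ {∞}

/-- `α` is a finite logarithmic asymptotic value of `f`: for some `r > 0` there is a
connected component `U` of `f⁻¹(B(α,r))` which is simply connected, and the restriction of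
`f` is a covering map from `U` onto `B(α,r) \ {α}`. -/
def IsLogAsymptoticValue (f : ℂ → ℂ) (α : ℂ) : Prop :=
  ∃ r > (0 : ℝ), ∃ U : Set ℂ,
    (∃ z ∈ f ⁻¹' Metric.ball α r, U = connectedComponentIn (f ⁻¹' Metric.ball α r) z) ∧
    SimplyConnectedSpace U ∧
    ∃ h : Set.MapsTo f U (Metric.ball α r \ {α}),
      IsCoveringMap (Set.MapsTo.restrict f U (Metric.ball α r \ {α}) h) ∧
      Function.Surjective (Set.MapsTo.restrict f U (Metric.ball α r \ {α}) h)

/-- `E ⊆ ℂ` is a spider's web. -/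
def SpidersWeb (E : Set ℂ) : Prop :=
  IsConnected E ∧ ∃ G : ℕ → Set ℂ,
    (∀ n, Bornology.IsBounded (G n) ∧ IsOpen (G n) ∧ SimplyConnectedSpace (G n)) ∧
    (∀ n, frontier (G n) ⊆ E) ∧ (∀ n, G n ⊆ G (n + 1)) ∧ (⋃ n, G n) = Set.univ

/-- `E` separates the point `z` from infinity. -/
def SeparatesFromInfinity (E : Set ℂ) (z : ℂ) : Prop :=
  ∃ U : Set ℂ, Bornology.IsBounded U ∧ IsOpen U ∧ z ∈ U ∧ frontier U ⊆ E

/-- The maximum modulus `M(r, f)`. -/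
def maxModulus (f : ℂ → ℂ) (r : ℝ) : ℝ :=
  sSup ((fun z => ‖f z‖) '' Metric.sphere (0 : ℂ) r)

/-- The fast escaping set `A(f)`, defined relative to `R`. -/
def fastEscapingSet (f : ℂ → ℂ) (R : ℝ) : Set ℂ :=
  {z | ∃ ℓ : ℕ, ∀ n : ℕ, (fun r => maxModulus f r)^[n] R ≤ ‖f^[n + ℓ] z‖}

/-- `α` is a finite asymptotic value of `f`: there is a continuous curve tending to `∞`
along which `f` tends to `α`. -/
def IsAsymptoticValue (f : ℂ → ℂ) (α : ℂ) : Prop :=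
  ∃ γ : ℝ → ℂ, Continuous γ ∧
    Tendsto (fun t => ‖γ t‖) atTop atTop ∧
    Tendsto (fun t => f (γ t)) atTop (nhds α)

/-- The set of critical values of `f`. -/
def criticalValues (f : ℂ → ℂ) : Set ℂ :=
  {w | ∃ z, deriv f z = 0 ∧ f z = w}

/-!
Pick `z ∈ T`, put `s = |f z - α|`, and lift the circle `|w - α| = s` through `z` along the
covering `f : T → B(α,r) \ {α}`: this gives a compact connected `L ⊆ T` with `f(L)` equal to the
circle, and `R` is any radius with `L ⊆ B(0,R)`, so that `L ⊆ V`.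

If `V` lies in a bounded component `W` of `T \ γ`, then `A = f(W)` is open and contains the
circle. As `closure W` is compact and `T`, `W` are components of open sets, a limit point of `A`
in `B(α,r)` is the image of a point of `closure W ∩ T ⊆ W ∪ (γ ∩ T)`; in particular it is not
`α`. So `B(α,s) \ closure A` is an open neighbourhood of `α` whose frontier lies in
`f(γ ∩ T)`, and it therefore contains the component of `ℂ \ f(γ ∩ T)` containing `α`.
-/

open Real

theorem IsCoveringMap.exists_isCompact_isConnected_image_eq_range {E X : Type*}
    [TopologicalSpace E] [TopologicalSpace X] {p : E → X} (hp : IsCoveringMap p)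
    (γ : C(unitInterval, X)) {e : E} (he : γ 0 = p e) :
    ∃ K : Set E, IsCompact K ∧ IsConnected K ∧ e ∈ K ∧ p '' K = range γ := by
  let Γ := hp.liftPath γ e he
  refine ⟨range Γ, isCompact_range Γ.continuous, isConnected_range Γ.continuous,
    ⟨0, hp.liftPath_zero γ e he⟩, ?_⟩
  rw [← range_comp, hp.liftPath_lifts]

theorem sphere_subset_range_circleMap_unitInterval (c : ℂ) {s : ℝ} (hs : 0 ≤ s) (θ₀ : ℝ) :
    sphere c s ⊆ range fun t : unitInterval => circleMap c s (θ₀ + 2 * π * t) := by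
  intro w hw
  obtain ⟨θ, hθ, rfl⟩ : w ∈ circleMap c s '' Icc θ₀ (θ₀ + 2 * π) := by
    rwa [(periodic_circleMap c s).image_Icc two_pi_pos, range_circleMap, abs_of_nonneg hs]
  have ht : (θ - θ₀) / (2 * π) ∈ unitInterval :=
    ⟨div_nonneg (by linarith [hθ.1]) two_pi_pos.le,
      (div_le_one two_pi_pos).mpr (by linarith [hθ.2])⟩
  exact ⟨⟨_, ht⟩, by field_simp; ring_nf⟩

theorem exists_isCompact_isConnected_sphere_subset_image {f : ℂ → ℂ} {T : Set ℂ} {α : ℂ}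
    {r : ℝ} (hmaps : MapsTo f T (ball α r \ {α})) (hcov : IsCoveringMap (hmaps.restrict f T _))
    {z : ℂ} (hz : z ∈ T) :
    ∃ L ⊆ T, IsCompact L ∧ IsConnected L ∧ z ∈ L ∧ sphere α (dist (f z) α) ⊆ f '' L := by
  set s := dist (f z) α
  set θ₀ := Complex.arg (f z - α)
  have hs : 0 < s := dist_pos.mpr (hmaps hz).2
  have hmem (θ : ℝ) : circleMap α s θ ∈ ball α r \ {α} :=
    ⟨sphere_subset_ball (hmaps hz).1 (circleMap_mem_sphere α hs.le θ), circleMap_ne_center hs.ne'⟩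
  let loop : C(unitInterval, ↥(ball α r \ {α})) :=
    ⟨fun t => ⟨circleMap α s (θ₀ + 2 * π * t), hmem _⟩,
      ((continuous_circleMap α s).comp (by fun_prop)).subtype_mk _⟩
  have hloop0 : loop 0 = hmaps.restrict f T _ ⟨z, hz⟩ := by
    ext
    simp [loop, circleMap, θ₀, s, dist_eq_norm, Complex.norm_mul_exp_arg_mul_I]
  obtain ⟨K, hK, hKconn, hzK, hKimage⟩ :=
    hcov.exists_isCompact_isConnected_image_eq_range loop hloop0
  refine ⟨(↑) '' K, Subtype.coe_image_subset _ _, hK.image continuous_subtype_val,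
    hKconn.image _ continuous_subtype_val.continuousOn, ⟨_, hzK, rfl⟩, ?_⟩
  calc sphere α s ⊆ range fun t : unitInterval => circleMap α s (θ₀ + 2 * π * t) :=
        sphere_subset_range_circleMap_unitInterval α hs.le θ₀
    _ = (↑) '' (hmaps.restrict f T _ '' K) := by rw [hKimage, ← range_comp]; rfl
    _ = f '' ((↑) '' K) := by rw [image_image, image_image]; rfl

theorem closure_connectedComponentIn_inter_subset {X : Type*} [TopologicalSpace X]
    [LocallyConnectedSpace X] {Ω : Set X} (hΩ : IsOpen Ω) (w : X) :
    closure (connectedComponentIn Ω w) ∩ Ω ⊆ connectedComponentIn Ω w := by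
  rintro x ⟨hx, hxΩ⟩
  obtain ⟨y, hyx, hyw⟩ := mem_closure_iff.mp hx _ hΩ.connectedComponentIn
    (mem_connectedComponentIn hxΩ)
  rw [connectedComponentIn_eq hyw, ← connectedComponentIn_eq hyx]
  exact mem_connectedComponentIn hxΩ

theorem isOpen_image_of_isCoveringMap_restrict {X Y : Type*} [TopologicalSpace X]
    [TopologicalSpace Y] {f : X → Y} {T : Set X} {P : Set Y} (hP : IsOpen P)
    (hmaps : MapsTo f T P) (hcov : IsCoveringMap (hmaps.restrict f T P)) {W : Set X}
    (hW : IsOpen W) (hWT : W ⊆ T) : IsOpen (f '' W) := by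
  have := (hP.isOpenMap_subtype_val.comp hcov.isOpenMap) _ (hW.preimage continuous_subtype_val)
  rwa [image_comp, ← image_comp, MapsTo.restrict_commutes, image_comp,
    Subtype.image_preimage_coe, inter_eq_right.mpr hWT] at this

theorem closure_image_connectedComponentIn_inter_subset {X Y : Type*} [TopologicalSpace X]
    [LocallyConnectedSpace X] [TopologicalSpace Y] [T2Space Y] {f : X → Y} (hf : Continuous f)
    {U : Set Y} (hU : IsOpen U) (z : X) {γ : Set X} (hγ : IsClosed γ) (w : X)
    (hW : IsCompact (closure (connectedComponentIn (connectedComponentIn (f ⁻¹' U) z \ γ) w))) :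
    closure (f '' connectedComponentIn (connectedComponentIn (f ⁻¹' U) z \ γ) w) ∩ U ⊆
      f '' connectedComponentIn (connectedComponentIn (f ⁻¹' U) z \ γ) w ∪
        f '' (γ ∩ connectedComponentIn (f ⁻¹' U) z) := by
  set T := connectedComponentIn (f ⁻¹' U) z
  set W := connectedComponentIn (T \ γ) w
  rintro _ ⟨hx, hxU⟩
  obtain ⟨y, hyW, rfl⟩ := (image_closure_of_isCompact hW hf.continuousOn).symm ▸ hx
  have hyT : y ∈ T := closure_connectedComponentIn_inter_subset (hU.preimage hf) z
    ⟨closure_mono ((connectedComponentIn_subset _ _).trans sdiff_subset) hyW, hxU⟩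
  by_cases hyγ : y ∈ γ
  · exact Or.inr ⟨y, ⟨hyγ, hyT⟩, rfl⟩
  · have hTγ : IsOpen (T \ γ) := ((hU.preimage hf).connectedComponentIn).sdiff hγ
    exact Or.inl ⟨y, closure_connectedComponentIn_inter_subset hTγ w ⟨hyW, hyT, hyγ⟩, rfl⟩

theorem connectedComponentIn_compl_subset_ball {X : Type*} [PseudoMetricSpace X]
    {A F : Set X} {α : X} {s : ℝ} (hs : 0 < s) (hA : IsOpen A) (hsA : sphere α s ⊆ A)
    (hαA : α ∉ A) (hαF : α ∉ F) (hcl : closure A ∩ ball α s ⊆ A ∪ F) :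
    connectedComponentIn Fᶜ α ⊆ ball α s := by
  have hO : IsOpen (ball α s \ closure A) := isOpen_ball.sdiff isClosed_closure
  have hαO : α ∈ ball α s \ closure A := by
    refine ⟨mem_ball_self hs, fun h => ?_⟩
    rcases hcl ⟨h, mem_ball_self hs⟩ with h | h
    exacts [hαA h, hαF h]
  refine (isPreconnected_connectedComponentIn.subset_of_closure_inter_subset hO
    ⟨α, mem_connectedComponentIn hαF, hαO⟩ ?_).trans sdiff_subset
  rintro x ⟨hxO, hxK⟩
  have hxA : x ∉ A :=
    closure_minimal ((sdiff_subset_compl _ _).trans (compl_subset_compl.mpr subset_closure))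
      hA.isClosed_compl hxO
  have hxs : x ∈ ball α s :=
    (closure_ball_subset_closedBall (closure_mono sdiff_subset hxO)).lt_of_ne
      fun h => hxA (hsA h)
  refine ⟨hxs, fun hxcl => ?_⟩
  rcases hcl ⟨hxcl, hxs⟩ with h | h
  exacts [hxA h, connectedComponentIn_subset _ _ hxK h]

theorem logarithmic_tract_lemma_general (f : ℂ → ℂ) (hf : EntireTranscendental f)
    (α : ℂ) (r : ℝ) (T : Set ℂ)
    (hT : ∃ z ∈ f ⁻¹' Metric.ball α r, T = connectedComponentIn (f ⁻¹' Metric.ball α r) z)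
    (hmaps : Set.MapsTo f T (Metric.ball α r \ {α}))
    (hcov : IsCoveringMap (Set.MapsTo.restrict f T (Metric.ball α r \ {α}) hmaps)) :
    ∃ R > (0 : ℝ), ∃ V : Set ℂ,
      (∃ z ∈ T ∩ Metric.ball (0 : ℂ) R,
        V = connectedComponentIn (T ∩ Metric.ball (0 : ℂ) R) z) ∧
      ∀ γ : Set ℂ, γ.Nonempty → IsCompact γ → IsConnected γ →
        γ ⊆ (closure (Metric.ball (0 : ℂ) R))ᶜ →
        (∃ w ∈ T \ γ, V ⊆ connectedComponentIn (T \ γ) w ∧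
          Bornology.IsBounded (connectedComponentIn (T \ γ) w)) →
        connectedComponentIn (f '' (γ ∩ T))ᶜ α ⊆ Metric.ball α r := by
  obtain ⟨z, hz, rfl⟩ := hT
  set T := connectedComponentIn (f ⁻¹' ball α r) z
  have hzT : z ∈ T := mem_connectedComponentIn hz
  have hα {X : Set ℂ} (hX : X ⊆ T) : α ∉ f '' X := fun ⟨y, hy, hyα⟩ => (hmaps (hX hy)).2 hyα
  obtain ⟨L, hLT, hL, hLconn, hzL, hsphere⟩ :=
    exists_isCompact_isConnected_sphere_subset_image hmaps hcov hzT
  obtain ⟨R, hLR⟩ := hL.isBounded.subset_ball 0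
  refine ⟨R, pos_of_mem_ball (hLR hzL), _, ⟨z, ⟨hzT, hLR hzL⟩, rfl⟩, ?_⟩
  rintro γ - hγ - - ⟨w, -, hVW, hW⟩
  set W := connectedComponentIn (T \ γ) w
  have hLW : L ⊆ W :=
    (hLconn.isPreconnected.subset_connectedComponentIn hzL (subset_inter hLT hLR)).trans hVW
  have hWT : W ⊆ T := (connectedComponentIn_subset _ _).trans sdiff_subset
  have hWopen : IsOpen W :=
    ((isOpen_ball.preimage hf.1.continuous).connectedComponentIn.sdiff
      hγ.isClosed).connectedComponentIn
  have hfz : f z ∈ ball α r \ {α} := hmaps hzT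
  have hclosure : closure (f '' W) ∩ ball α (dist (f z) α) ⊆ f '' W ∪ f '' (γ ∩ T) :=
    (inter_subset_inter_right _ (ball_subset_ball hfz.1.le)).trans
      (closure_image_connectedComponentIn_inter_subset hf.1.continuous isOpen_ball z hγ.isClosed w
        hW.isCompact_closure)
  have hAopen : IsOpen (f '' W) :=
    isOpen_image_of_isCoveringMap_restrict (isOpen_ball.sdiff isClosed_singleton) hmaps hcov
      hWopen hWT
  have hsphereA : sphere α (dist (f z) α) ⊆ f '' W := hsphere.trans (image_mono hLW)
  exact (connectedComponentIn_compl_subset_ball (dist_pos.mpr hfz.2) hAopen hsphereA (hα hWT)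
    (hα inter_subset_right) hclosure).trans (ball_subset_ball hfz.1.le)

theorem logarithmic_tract_lemma (f : ℂ → ℂ) (hf : EntireTranscendental f)
    (α : ℂ) (r : ℝ) (hr : 0 < r) (T : Set ℂ)
    (hT : ∃ z ∈ f ⁻¹' Metric.ball α r, T = connectedComponentIn (f ⁻¹' Metric.ball α r) z)
    (hTsc : SimplyConnectedSpace T)
    (hmaps : Set.MapsTo f T (Metric.ball α r \ {α}))
    (hcov : IsCoveringMap (Set.MapsTo.restrict f T (Metric.ball α r \ {α}) hmaps))
    (hsurj : Function.Surjective (Set.MapsTo.restrict f T (Metric.ball α r \ {α}) hmaps)) :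
    ∃ R > (0 : ℝ), ∃ V : Set ℂ,
      (∃ z ∈ T ∩ Metric.ball (0 : ℂ) R,
        V = connectedComponentIn (T ∩ Metric.ball (0 : ℂ) R) z) ∧
      ∀ γ : Set ℂ, γ.Nonempty → IsCompact γ → IsConnected γ →
        γ ⊆ (closure (Metric.ball (0 : ℂ) R))ᶜ →
        (∃ w ∈ T \ γ, V ⊆ connectedComponentIn (T \ γ) w ∧
          Bornology.IsBounded (connectedComponentIn (T \ γ) w)) →
        connectedComponentIn (f '' (γ ∩ T))ᶜ α ⊆ Metric.ball α r :=
  logarithmic_tract_lemma_general f hf α r T hT hmaps hcov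
end
end

section
/- Let f be a transcendental entire function with a finite logarithmic asymptotic value α. If α ∈ F(f) and the Fatou component of f containing α is contained in BO(f), then f has an unbounded Fatou component contained in BO(f). -/
open Set Metric Filter Topology OnePoint

noncomputable section

/-! Near the logarithmic asymptotic value `α` the function `f` has a tract: a component `T` of
`f⁻¹(B(α, ε))` on which `f` omits `α`. By the maximum modulus principle applied to `1 / (f - α)`,
such a component is unbounded. Since `α` has a bounded orbit and lies in `F(f)`, the iterates are
uniformly bounded near `α`; by the Schwarz lemma they are then equicontinuous, so a whole disc
`B(α, ε)` lies in `F(f)`, and by complete invariance of `F(f)` so does `T ⊆ f⁻¹(B(α, ε))`. The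
Fatou component `U ⊇ T` is therefore unbounded, and `f(U)` lies in the Fatou component of `α`,
which is contained in `BO(f)`; hence `U ⊆ BO(f)`. -/

section Equicontinuity

variable {ι X Y α β : Type*} [TopologicalSpace X] [TopologicalSpace Y] [UniformSpace α]
  [UniformSpace β]

theorem UniformContinuous.comp_equicontinuousAt {u : α → β} (hu : UniformContinuous u)
    {F : ι → X → α} {x₀ : X} (h : EquicontinuousAt F x₀) :
    EquicontinuousAt (fun i => u ∘ F i) x₀ :=
  fun _ hV => h _ (hu hV)

theorem equicontinuousAt_comp_iff_of_map_nhds_eq {u : X → Y} {x₀ : X}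
    (hu : map u (𝓝 x₀) = 𝓝 (u x₀)) {F : ι → Y → α} :
    EquicontinuousAt (fun i => F i ∘ u) x₀ ↔ EquicontinuousAt F (u x₀) := by
  refine ⟨fun h V hV => ?_, fun h V hV => ?_⟩
  · rw [← hu]
    exact h V hV
  · have := h V hV
    rw [← hu] at this
    exact this

theorem equicontinuousAt_nat_iff_succ {F : ℕ → X → α} {x₀ : X} :
    EquicontinuousAt F x₀ ↔
      ContinuousAt (F 0) x₀ ∧ EquicontinuousAt (fun n => F (n + 1)) x₀ := by
  refine ⟨fun h => ⟨h.continuousAt 0, h.comp _⟩, fun ⟨h₀, h⟩ V hV => ?_⟩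
  filter_upwards [h₀ (mem_nhds_left _ hV), h V hV] with x hx₀ hx n
  cases n with
  | zero => exact hx₀
  | succ n => exact hx n

theorem EquicontinuousAt.eventually_forall_mem {F : ι → X → α} {x₀ : X}
    (h : EquicontinuousAt F x₀) {K B : Set α} (hK : IsCompact K) (hB : B ∈ 𝓝ˢ K)
    (hF : ∀ i, F i x₀ ∈ K) : ∀ᶠ x in 𝓝 x₀, ∀ i, F i x ∈ B := by
  obtain ⟨V, hV, hVB⟩ := (hK.nhdsSet_basis_uniformity (uniformity α).basis_sets).mem_iff.mp hB
  filter_upwards [h V hV] with x hx i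
  exact hVB (mem_biUnion (hF i) (hx i))

end Equicontinuity

theorem Complex.equicontinuousAt_of_mapsTo_closedBall {ι E F : Type*} [NormedAddCommGroup E]
    [NormedSpace ℂ E] [NormedAddCommGroup F] [NormedSpace ℂ F] {G : ι → E → F} {c : E}
    {R M : ℝ} (hR : 0 < R) (hd : ∀ i, DifferentiableOn ℂ (G i) (ball c R))
    (hM : ∀ i, MapsTo (G i) (ball c R) (closedBall 0 M)) : EquicontinuousAt G c := by
  refine Metric.equicontinuousAt_of_continuity_modulus (fun z => 2 * M / R * dist z c) ?_ G ?_
  · simpa using ((continuous_id.dist (continuous_const (y := c))).tendsto c).const_mul (2 * M / R)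
  filter_upwards [ball_mem_nhds c hR] with z hz i
  have hmaps : MapsTo (G i) (ball c R) (closedBall (G i c) (2 * M)) := fun w hw =>
    (dist_le_norm_add_norm _ _).trans <| by
      linarith [mem_closedBall_zero_iff.mp (hM i hw),
        mem_closedBall_zero_iff.mp (hM i (mem_ball_self hR))]
  rw [dist_comm]
  exact Complex.dist_le_div_mul_dist_of_mapsTo_ball (hd i) hmaps hz

section Iteration

attribute [local instance] uniformSpaceOfCompactR1

theorem OnePoint.uniformContinuous_coe {X : Type*} [UniformSpace X] [LocallyCompactSpace X]
    [T2Space X] : UniformContinuous ((↑) : X → OnePoint X) :=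
  continuous_coe.uniformContinuous_of_tendsto_cocompact
    (coclosedCompact_eq_cocompact (X := X) ▸ tendsto_coe_infty)

variable {f : ℂ → ℂ} {z : ℂ}

theorem mem_fatouSet_iff :
    z ∈ fatouSet f ↔ EquicontinuousAt (fun n (w : ℂ) => ((f^[n + 1] w : ℂ) : OnePoint ℂ)) z :=
  Iff.rfl

theorem mem_fatouSet_of_equicontinuousAt (h : EquicontinuousAt (fun n => f^[n + 1]) z) :
    z ∈ fatouSet f :=
  OnePoint.uniformContinuous_coe.comp_equicontinuousAt h

theorem apply_mem_fatouSet_iff (hc : Continuous f) (ho : IsOpenMap f) :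
    f z ∈ fatouSet f ↔ z ∈ fatouSet f := by
  have hG₀ : ContinuousAt (fun w => ((f^[0 + 1] w : ℂ) : OnePoint ℂ)) z :=
    (continuous_coe.comp hc).continuousAt
  rw [mem_fatouSet_iff, mem_fatouSet_iff, equicontinuousAt_nat_iff_succ (x₀ := z),
    and_iff_right hG₀]
  exact (equicontinuousAt_comp_iff_of_map_nhds_eq (ho.map_nhds_eq hc.continuousAt)).symm

theorem exists_eventually_norm_iterate_le (hz : z ∈ fatouSet f)
    (hb : z ∈ boundedOrbitSet f) : ∃ M, ∀ᶠ w in 𝓝 z, ∀ n, ‖f^[n + 1] w‖ ≤ M := by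
  obtain ⟨K, -, horb⟩ := hb
  have hK : IsCompact (((↑) : ℂ → OnePoint ℂ) '' closedBall 0 K) :=
    (isCompact_closedBall 0 K).image continuous_coe
  have hB : ((↑) : ℂ → OnePoint ℂ) '' ball 0 (K + 1) ∈
      𝓝ˢ (((↑) : ℂ → OnePoint ℂ) '' closedBall 0 K) :=
    (isOpenEmbedding_coe.isOpenMap _ isOpen_ball).mem_nhdsSet.mpr
      (image_mono (closedBall_subset_ball (lt_add_one K)))
  refine ⟨K + 1, ?_⟩
  filter_upwards [mem_fatouSet_iff.mp hz |>.eventually_forall_mem hK hB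
    fun n => mem_image_of_mem _ (mem_closedBall_zero_iff.mpr (horb (n + 1)).le)] with w hw n
  obtain ⟨v, hv, hvw⟩ := hw n
  rw [OnePoint.coe_eq_coe] at hvw
  exact hvw ▸ (mem_ball_zero_iff.mp hv).le

theorem mem_fatouSet_of_eventually_norm_iterate_le {M : ℝ}
    (hf : Differentiable ℂ f) (h : ∀ᶠ w in 𝓝 z, ∀ n, ‖f^[n + 1] w‖ ≤ M) : z ∈ fatouSet f := by
  obtain ⟨R, hR, hball⟩ := Metric.eventually_nhds_iff_ball.mp h
  exact mem_fatouSet_of_equicontinuousAt <|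
    Complex.equicontinuousAt_of_mapsTo_closedBall hR (fun n => (hf.iterate _).differentiableOn)
      fun n w hw => mem_closedBall_zero_iff.mpr (hball w hw n)

theorem eventually_mem_fatouSet_of_mem_boundedOrbitSet (hf : Differentiable ℂ f)
    (hz : z ∈ fatouSet f) (hb : z ∈ boundedOrbitSet f) : ∀ᶠ w in 𝓝 z, w ∈ fatouSet f := by
  obtain ⟨M, hM⟩ := exists_eventually_norm_iterate_le hz hb
  exact hM.eventually_nhds.mono fun w hw => mem_fatouSet_of_eventually_norm_iterate_le hf hw

theorem image_connectedComponentIn_fatouSet_subset (hc : Continuous f) (ho : IsOpenMap f)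
    (hz : z ∈ fatouSet f) :
    f '' connectedComponentIn (fatouSet f) z ⊆ connectedComponentIn (fatouSet f) (f z) :=
  (hc.continuousOn.image_connectedComponentIn_subset hz).trans <|
    connectedComponentIn_mono _ <|
      image_subset_iff.mpr fun _ hw => (apply_mem_fatouSet_iff hc ho).mpr hw

theorem mem_boundedOrbitSet_of_apply_mem (h : f z ∈ boundedOrbitSet f) :
    z ∈ boundedOrbitSet f := by
  obtain ⟨K, hK, horb⟩ := h
  refine ⟨max K (‖z‖ + 1), lt_max_of_lt_left hK, fun n => ?_⟩
  cases n with
  | zero => exact lt_max_of_lt_right (lt_add_one _)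
  | succ n => exact lt_max_of_lt_left (horb n)

end Iteration

theorem EntireTranscendental.isOpenMap {f : ℂ → ℂ} (hf : EntireTranscendental f) :
    IsOpenMap f := by
  refine (AnalyticOnNhd.is_constant_or_isOpenMap fun z _ => hf.1.analyticAt z).resolve_left ?_
  rintro ⟨w, hw⟩
  exact hf.2 ⟨Polynomial.C w, fun z => by simp [hw z]⟩

theorem IsOpen.disjoint_frontier_connectedComponentIn {X : Type*} [TopologicalSpace X]
    [LocallyConnectedSpace X] {P : Set X} (hP : IsOpen P) (x : X) :
    Disjoint (frontier (connectedComponentIn P x)) P := by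
  refine disjoint_left.mpr fun y hy hyP => ?_
  obtain ⟨w, hwy, hwx⟩ := mem_closure_iff.mp (frontier_subset_closure hy) _
    hP.connectedComponentIn (mem_connectedComponentIn hyP)
  rw [hP.connectedComponentIn.frontier_eq,
    (connectedComponentIn_eq hwx).trans (connectedComponentIn_eq hwy).symm] at hy
  exact hy.2 (mem_connectedComponentIn hyP)

theorem not_isBounded_connectedComponentIn_preimage_ball {E : Type*} [NormedAddCommGroup E]
    [NormedSpace ℂ E] [Nontrivial E] {f : E → ℂ} (hf : Differentiable ℂ f) {α : ℂ} {s : ℝ}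
    {z : E} (hz : f z ∈ ball α s)
    (hne : ∀ w ∈ connectedComponentIn (f ⁻¹' ball α s) z, f w ≠ α) :
    ¬ Bornology.IsBounded (connectedComponentIn (f ⁻¹' ball α s) z) := by
  set W := connectedComponentIn (f ⁻¹' ball α s) z
  have hs : 0 < s := pos_of_mem_ball hz
  have hfr : ∀ w ∈ frontier W, s ≤ ‖f w - α‖ := fun w hw => by
    simpa [dist_eq_norm] using disjoint_left.mp
      ((isOpen_ball.preimage hf.continuous).disjoint_frontier_connectedComponentIn z) hw
  have hcl : ∀ w ∈ closure W, f w - α ≠ 0 := by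
    intro w hw
    rw [closure_eq_self_union_frontier] at hw
    rcases hw with hw | hw
    · exact sub_ne_zero.mpr (hne w hw)
    · exact norm_pos_iff.mp (hs.trans_le (hfr w hw))
  have hd : DiffContOnCl ℂ (fun w => (f w - α)⁻¹) W :=
    ⟨(hf.differentiableOn.sub_const α).inv fun w hw => sub_ne_zero.mpr (hne w hw),
      fun w hw => ((hf.continuous.sub continuous_const).continuousAt.inv₀
        (hcl w hw)).continuousWithinAt⟩
  intro hb
  have hle := Complex.norm_le_of_forall_mem_frontier_norm_le hb hd (C := s⁻¹)
    (fun w hw => by simpa using inv_anti₀ hs (hfr w hw))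
    (subset_closure (mem_connectedComponentIn hz))
  rw [norm_inv] at hle
  have hpos : 0 < ‖f z - α‖ :=
    norm_pos_iff.mpr (sub_ne_zero.mpr (hne z (mem_connectedComponentIn hz)))
  exact (inv_strictAnti₀ hpos (by simpa [dist_eq_norm] using hz)).not_ge hle

theorem IsLogAsymptoticValue.exists_unbounded_isPreconnected_subset_preimage_ball
    {f : ℂ → ℂ} {α : ℂ} (hα : IsLogAsymptoticValue f α) (hf : Differentiable ℂ f) {ε : ℝ}
    (hε : 0 < ε) :
    ∃ T : Set ℂ, IsPreconnected T ∧ ¬ Bornology.IsBounded T ∧ T ⊆ f ⁻¹' ball α ε := by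
  obtain ⟨r, hr, _, ⟨zU, -, rfl⟩, -, hmaps, -, hsurj⟩ := hα
  have hpunctured : ∀ᶠ β in 𝓝[≠] α, β ∈ ball α (min ε r) ∧ β ≠ α :=
    (eventually_nhdsWithin_of_eventually_nhds (ball_mem_nhds α (lt_min hε hr))).and
      eventually_mem_nhdsWithin
  obtain ⟨β, hβ, hβα⟩ := hpunctured.exists
  obtain ⟨⟨z, hzU⟩, hz⟩ := hsurj ⟨β, ball_subset_ball (min_le_right _ _) hβ, hβα⟩
  have hfz : f z = β := congrArg Subtype.val hz
  have hsub : connectedComponentIn (f ⁻¹' ball α (min ε r)) z ⊆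
      connectedComponentIn (f ⁻¹' ball α r) zU := by
    rw [connectedComponentIn_eq hzU]
    exact connectedComponentIn_mono _ (preimage_mono (ball_subset_ball (min_le_right _ _)))
  exact ⟨_, isPreconnected_connectedComponentIn,
    not_isBounded_connectedComponentIn_preimage_ball hf (hfz ▸ hβ)
      fun w hw => (hmaps (hsub hw)).2,
    (connectedComponentIn_subset _ _).trans
      (preimage_mono (ball_subset_ball (min_le_left _ _)))⟩

theorem unbounded_fatou_component_in_BO (f : ℂ → ℂ)
    (hf : EntireTranscendental f) (α : ℂ) (hα : IsLogAsymptoticValue f α)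
    (hαF : α ∈ fatouSet f)
    (hcomp : connectedComponentIn (fatouSet f) α ⊆ boundedOrbitSet f) :
    ∃ U : Set ℂ, IsFatouComponent f U ∧ ¬ Bornology.IsBounded U ∧
      U ⊆ boundedOrbitSet f := by
  have hc : Continuous f := hf.1.continuous
  obtain ⟨ε, hε, hballF⟩ := Metric.mem_nhds_iff.mp <|
    eventually_mem_fatouSet_of_mem_boundedOrbitSet hf.1 hαF
      (hcomp (mem_connectedComponentIn hαF))
  obtain ⟨T, hTconn, hTunb, hTball⟩ :=
    hα.exists_unbounded_isPreconnected_subset_preimage_ball hf.1 hε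
  obtain ⟨z₀, hz₀⟩ := Bornology.nonempty_of_not_isBounded hTunb
  have hTF : T ⊆ fatouSet f := fun z hz =>
    (apply_mem_fatouSet_iff hc hf.isOpenMap).mp (hballF (hTball hz))
  have hfz₀ : f z₀ ∈ connectedComponentIn (fatouSet f) α :=
    (convex_ball α ε).isPreconnected.subset_connectedComponentIn (mem_ball_self hε) hballF
      (hTball hz₀)
  refine ⟨connectedComponentIn (fatouSet f) z₀, ⟨z₀, hTF hz₀, rfl⟩,
    fun hb => hTunb (hb.subset (hTconn.subset_connectedComponentIn hz₀ hTF)), fun z hz => ?_⟩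
  rw [connectedComponentIn_eq hfz₀] at hcomp
  exact mem_boundedOrbitSet_of_apply_mem <| hcomp <|
    image_connectedComponentIn_fatouSet_subset hc hf.isOpenMap (hTF hz₀) (mem_image_of_mem f hz)
end
end
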